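/- The average sensitivity of any nested canalizing function is strictly less than 4/3. -/

import Mathlib

open Finset

/-- Sign encoding of a Boolean value: `true ↦ 1`, `false ↦ -1`. -/
def bsign (a : Bool) : ℝ := if a then 1 else -1

/-- The character `χ_U(x) = ∏_{i ∈ U} x_i` (inputs encoded as Booleans). -/
def chi {n : ℕ} (U : Finset (Fin n)) (x : Fin n → Bool) : ℝ :=
  ∏ i ∈ U, bsign (x i)

/-- Fourier coefficient `f̂(U) = 2^{-n} ∑_x f(x) χ_U(x)`. -/
noncomputable def fhat {n : ℕ} (f : (Fin n → Bool) → ℝ) (U : Finset (Fin n)) : ℝ :=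
  (∑ x : Fin n → Bool, f x * chi U x) / 2 ^ n

/-- `f` is a (±1-valued) Boolean function. -/
def IsBoolean {n : ℕ} (f : (Fin n → Bool) → ℝ) : Prop := ∀ x, f x = 1 ∨ f x = -1

/-- Restriction `f^{(i,a)}` of `f` obtained by fixing the `i`-th input to `a`. -/
def restrict {n : ℕ} (f : (Fin n → Bool) → ℝ) (i : Fin n) (a : Bool) :
    (Fin n → Bool) → ℝ :=
  fun x => f (Function.update x i a)

/-- Variable `i` is relevant for `f`. -/
def relevant {n : ℕ} (f : (Fin n → Bool) → ℝ) (i : Fin n) : Prop :=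
  ∃ x, f x ≠ f (Function.update x i (!(x i)))

/-- Number of relevant variables of `f`. -/
noncomputable def numRel {n : ℕ} (f : (Fin n → Bool) → ℝ) : ℕ :=
  Nat.card {i : Fin n // relevant f i}

/-- Influence `I_i(f) = Pr[f(X) ≠ f(X ⊕ e_i)]` for uniform `X`. -/
noncomputable def influence {n : ℕ} (f : (Fin n → Bool) → ℝ) (i : Fin n) : ℝ :=
  (Nat.card {x : Fin n → Bool // f x ≠ f (Function.update x i (!(x i)))} : ℝ) / 2 ^ n

/-- Average sensitivity `as(f) = ∑_i I_i(f)`. -/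
noncomputable def avgSens {n : ℕ} (f : (Fin n → Bool) → ℝ) : ℝ :=
  ∑ i : Fin n, influence f i

/-- `IsNCFwith f L` : `f` is a nested canalizing function with the nested canalizing
structure recorded by the list `L` of triples `(π(j), α_j, β_j)`: fixing variable
`π(j)` to its canalizing value `α_j` forces the output `β_j`, and the restriction to
the non-canalizing value continues with the rest of the list; the base case is a
constant (±1) function. -/
inductive IsNCFwith : {n : ℕ} → ((Fin n → Bool) → ℝ) → List (Fin n × Bool × ℝ) → Prop where
  | const {n : ℕ} (f : (Fin n → Bool) → ℝ) (b : ℝ) (hb : b = 1 ∨ b = -1)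
      (h : ∀ x, f x = b) : IsNCFwith f []
  | step {n : ℕ} (f : (Fin n → Bool) → ℝ) (i : Fin n) (a : Bool) (b : ℝ)
      (hb : b = 1 ∨ b = -1) (L : List (Fin n × Bool × ℝ))
      (hrel : relevant f i)
      (hcan : ∀ x, x i = a → f x = b)
      (hrest : IsNCFwith (restrict f i (!a)) L) :
      IsNCFwith f ((i, a, b) :: L)

/-- `f` is a nested canalizing function. -/
def IsNCF {n : ℕ} (f : (Fin n → Bool) → ℝ) : Prop := ∃ L, IsNCFwith f L

/-- Variable `i` is most dominant: some nested canalizing ordering starts with `i`. -/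
def MostDominant {n : ℕ} (f : (Fin n → Bool) → ℝ) (i : Fin n) : Prop :=
  ∃ a b L, IsNCFwith f ((i, a, b) :: L)

/-- The canalized output values `β_1, β_2, …` recorded in `L` alternate in sign. -/
def AltBetas {n : ℕ} (L : List (Fin n × Bool × ℝ)) : Prop :=
  List.Chain' (fun p q : Fin n × Bool × ℝ => q.2.2 = -p.2.2) L

/-!
If `x i = a` forces `f x = b` and `g` is the restriction of `f` to `x i = !a`, averaging
over the `i`-th coordinate gives `as f = Pr[g ≠ b] + as g / 2` and
`Pr[f ≠ c] = ([b ≠ c] + Pr[g ≠ c]) / 2`.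
Along the nested canalizing structure one proves by induction both `as f < 4/3` and
`Pr[f ≠ c] + as f / 2 < 4/3` for `c = ±1`: for `c = b` the latter is at most
`Pr[g ≠ b] + as g / 2`, and for `c = -b` it equals `1 + as g / 4`, because
`Pr[g ≠ b] + Pr[g ≠ -b] = 1`.
-/

open Function

section NestedCanalizing

variable {n : ℕ}

noncomputable def cubeProb (P : (Fin n → Bool) → Prop) : ℝ :=
  (Nat.card {x // P x} : ℝ) / 2 ^ n

theorem sum_natCard_update (P : (Fin n → Bool) → Prop) (i : Fin n) :
    ∑ v : Bool, Nat.card {x // P (update x i v)} = 2 * Nat.card {x // P x} := by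
  classical
  -- `(x, v) ↦ (update x i v, x i)` is an involution, so reindexing by it replaces
  -- `P (update x i v)` by `P x`.
  have hinv : Involutive fun p : (Fin n → Bool) × Bool => (update p.1 i p.2, p.1 i) := by
    rintro ⟨x, v⟩
    simp
  simp only [Nat.card_eq_fintype_card, Fintype.card_subtype, Finset.card_filter]
  calc ∑ v : Bool, ∑ x, (if P (update x i v) then 1 else 0)
      = ∑ p : (Fin n → Bool) × Bool, if P (update p.1 i p.2) then 1 else 0 := by
        rw [Finset.sum_comm, Fintype.sum_prod_type]
    _ = ∑ p : (Fin n → Bool) × Bool, if P p.1 then 1 else 0 :=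
        Equiv.sum_comp (hinv.toPerm _) fun p => if P p.1 then 1 else 0
    _ = 2 * ∑ x, if P x then 1 else 0 := by
        simp only [Fintype.sum_prod_type, Fintype.sum_bool, two_mul, Finset.sum_add_distrib]

theorem cubeProb_congr {P Q : (Fin n → Bool) → Prop} (h : ∀ x, P x ↔ Q x) :
    cubeProb P = cubeProb Q := by
  rw [show P = Q from funext fun x => propext (h x)]

theorem cubeProb_nonneg (P : (Fin n → Bool) → Prop) : 0 ≤ cubeProb P := by
  unfold cubeProb
  positivity

theorem cubeProb_add_cubeProb_not (P : (Fin n → Bool) → Prop) :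
    cubeProb P + cubeProb (fun x => ¬ P x) = 1 := by
  classical
  have hcard : Nat.card {x // P x} + Nat.card {x // ¬ P x} = 2 ^ n := by
    have hle := Fintype.card_subtype_le P
    simp only [Nat.card_eq_fintype_card, Fintype.card_subtype_compl]
    simp only [Fintype.card_pi, Fintype.card_bool, Finset.prod_const, Finset.card_univ,
      Fintype.card_fin] at hle ⊢
    omega
  rw [cubeProb, cubeProb, ← add_div, div_eq_one_iff_eq (by positivity)]
  exact_mod_cast hcard

theorem cubeProb_le_one (P : (Fin n → Bool) → Prop) : cubeProb P ≤ 1 := by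
  linarith [cubeProb_add_cubeProb_not P, cubeProb_nonneg fun x => ¬ P x]

theorem cubeProb_const (p : Prop) [Decidable p] :
    cubeProb (fun _ : Fin n → Bool => p) = if p then 1 else 0 := by
  by_cases hp : p <;> simp [cubeProb, hp]

theorem cubeProb_eq_average_update (P : (Fin n → Bool) → Prop) (i : Fin n) (a : Bool) :
    cubeProb P =
      (cubeProb (fun x => P (update x i a)) + cubeProb (fun x => P (update x i (!a)))) / 2 := by
  have h := sum_natCard_update P i
  rw [Fintype.sum_bool] at h
  have h' : (Nat.card {x // P (update x i a)} : ℝ) + Nat.card {x // P (update x i (!a))} =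
      2 * Nat.card {x // P x} := by
    cases a <;> simp only [Bool.not_false, Bool.not_true] <;> exact_mod_cast (by omega)
  simp only [cubeProb, ← add_div, h']
  ring

theorem restrict_update_self (f : (Fin n → Bool) → ℝ) (i : Fin n) (a v : Bool)
    (x : Fin n → Bool) : restrict f i a (update x i v) = restrict f i a x := by
  simp [_root_.restrict]

theorem influence_restrict_self (f : (Fin n → Bool) → ℝ) (i : Fin n) (a : Bool) :
    influence (restrict f i a) i = 0 := by
  simp [influence, restrict_update_self]

theorem avgSens_nonneg (f : (Fin n → Bool) → ℝ) : 0 ≤ avgSens f :=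
  Finset.sum_nonneg fun i _ => by unfold influence; positivity

theorem avgSens_eq_zero_of_forall_eq {f : (Fin n → Bool) → ℝ} {b : ℝ} (h : ∀ x, f x = b) :
    avgSens f = 0 :=
  Finset.sum_eq_zero fun i _ => by simp [influence, h]

theorem IsBoolean.cubeProb_ne_add_cubeProb_ne_neg {f : (Fin n → Bool) → ℝ} (hf : IsBoolean f)
    {b : ℝ} (hb : b = 1 ∨ b = -1) :
    cubeProb (fun x => f x ≠ b) + cubeProb (fun x => f x ≠ -b) = 1 := by
  rw [← cubeProb_add_cubeProb_not fun x => f x ≠ b]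
  congr 1
  refine cubeProb_congr fun x => ?_
  rcases hf x with h | h <;> rcases hb with rfl | rfl <;> norm_num [h]

section Canalizing

variable {f : (Fin n → Bool) → ℝ} {i : Fin n} {a : Bool} {b : ℝ}

theorem influence_eq_cubeProb_restrict_ne (hcan : ∀ x, x i = a → f x = b) :
    influence f i = cubeProb (fun x => restrict f i (!a) x ≠ b) := by
  have hcan' (x : Fin n → Bool) : f (update x i a) = b := hcan _ (update_self ..)
  rw [influence, ← cubeProb, cubeProb_eq_average_update _ i a]
  simp only [update_self, update_idem, Bool.not_not, hcan']
  rw [cubeProb_congr fun _ => ne_comm, add_self_div_two]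
  rfl

theorem influence_eq_influence_restrict_div_two (hcan : ∀ x, x i = a → f x = b)
    {j : Fin n} (hj : j ≠ i) :
    influence f j = influence (restrict f i (!a)) j / 2 := by
  rw [influence, ← cubeProb, cubeProb_eq_average_update _ i a]
  simp only [update_of_ne hj, update_self, hcan, ne_eq, not_true_eq_false,
    cubeProb_const, if_false, zero_add, update_comm hj.symm]
  rfl

theorem cubeProb_ne_eq_of_canalizing (hcan : ∀ x, x i = a → f x = b) (c : ℝ) :
    cubeProb (fun x => f x ≠ c) =
      ((if b ≠ c then 1 else 0) + cubeProb (fun x => restrict f i (!a) x ≠ c)) / 2 := by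
  have hcan' (x : Fin n → Bool) : f (update x i a) = b := hcan _ (update_self ..)
  rw [cubeProb_eq_average_update _ i a]
  simp only [hcan', cubeProb_const]
  rfl

theorem avgSens_eq_of_canalizing (hcan : ∀ x, x i = a → f x = b) :
    avgSens f =
      cubeProb (fun x => restrict f i (!a) x ≠ b) + avgSens (restrict f i (!a)) / 2 := by
  rw [avgSens, avgSens, ← Finset.add_sum_erase _ _ (Finset.mem_univ i),
    ← Finset.add_sum_erase _ _ (Finset.mem_univ i), influence_restrict_self, zero_add,
    influence_eq_cubeProb_restrict_ne hcan, Finset.sum_div]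
  congr 1
  exact Finset.sum_congr rfl fun j hj =>
    influence_eq_influence_restrict_div_two hcan (Finset.ne_of_mem_erase hj)

end Canalizing

namespace IsNCFwith

variable {f : (Fin n → Bool) → ℝ} {L : List (Fin n × Bool × ℝ)}

theorem isBoolean (h : IsNCFwith f L) : IsBoolean f := by
  induction h with
  | const f b hb hf => exact fun x => hf x ▸ hb
  | step f i a b hb L _ hcan _ ih =>
    intro x
    by_cases hxi : x i = a
    · exact hcan x hxi ▸ hb
    · have hx : update x i (!a) = x := by
        rw [← Bool.eq_not_of_ne hxi]
        exact update_eq_self i x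
      simpa only [_root_.restrict, hx] using ih x

theorem avgSens_lt_and_cubeProb_ne_add_half_avgSens_lt (h : IsNCFwith f L) :
    avgSens f < 4 / 3 ∧
      ∀ c : ℝ, (c = 1 ∨ c = -1) → cubeProb (fun x => f x ≠ c) + avgSens f / 2 < 4 / 3 := by
  induction h with
  | const f b hb hf =>
    rw [avgSens_eq_zero_of_forall_eq hf]
    refine ⟨by norm_num, fun c _ => ?_⟩
    linarith [cubeProb_le_one fun x => f x ≠ c]
  | step f i a b hb L _ hcan hrest ih =>
    obtain ⟨ih_avgSens, ihc⟩ := ih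
    have has := avgSens_eq_of_canalizing hcan
    refine ⟨has ▸ ihc b hb, fun c hc => ?_⟩
    rw [cubeProb_ne_eq_of_canalizing hcan, has]
    have hg := avgSens_nonneg (restrict f i (!a))
    obtain rfl | rfl : c = b ∨ c = -b := by
      rcases hb with rfl | rfl <;> rcases hc with rfl | rfl <;> norm_num
    · simp only [ne_eq, not_true_eq_false, if_false]
      linarith [ihc c hb]
    · have hsum := hrest.isBoolean.cubeProb_ne_add_cubeProb_ne_neg hb
      have hb_ne : b ≠ -b := by rcases hb with rfl | rfl <;> norm_num
      rw [if_pos hb_ne]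
      linarith

end IsNCFwith

end NestedCanalizing

/-- The average sensitivity of any nested canalizing function is less than `4/3`. -/
theorem avgSens_ncf_lt_four_thirds {n : ℕ} (f : (Fin n → Bool) → ℝ)
    (hf : IsNCF f) : avgSens f < 4 / 3 := by
  obtain ⟨L, hL⟩ := hf
  exact hL.avgSens_lt_and_cubeProb_ne_add_half_avgSens_lt.1
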